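/- arXiv:1907.03232 — 2 statements merged into one kernel-verified Lean document; each statement's English description precedes it below -/
import Mathlib

section
/- Fix d ≥ 1, ℓ ≥ 1 and k ∈ ℕ with ℓ − k = |α| for a multi-index α. Then for all nonzero y, z ∈ ℝ^d, | y^α/|y|^{ℓ−k} − z^α/|z|^{ℓ−k} | ≤ 2(ℓ−k) |y − z| / |y|. -/
private lemma abs_pow_sub_pow_le' (a b ε : ℝ) (ha : |a| ≤ 1) (hb : |b| ≤ 1)
    (hab : |a - b| ≤ ε) (n : ℕ) : |a ^ n - b ^ n| ≤ n * ε := by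
  induction n with
  | zero => simp
  | succ n ih =>
    have hε : 0 ≤ ε := le_trans (abs_nonneg _) hab
    have : a ^ (n+1) - b ^ (n+1) = a * (a ^ n - b ^ n) + (a - b) * b ^ n := by ring
    rw [this]
    calc |a * (a ^ n - b ^ n) + (a - b) * b ^ n|
        ≤ |a * (a ^ n - b ^ n)| + |(a - b) * b ^ n| := abs_add_le _ _
      _ = |a| * |a ^ n - b ^ n| + |a - b| * |b ^ n| := by rw [abs_mul, abs_mul]
      _ ≤ 1 * (n * ε) + ε * 1 := by
          have hbn : |b ^ n| ≤ 1 := by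
            rw [abs_pow]; exact pow_le_one₀ (abs_nonneg b) hb
          have h1 := mul_le_mul ha ih (abs_nonneg _) zero_le_one
          have h2 := mul_le_mul hab hbn (abs_nonneg _) hε
          linarith
      _ = ((n : ℝ) + 1) * ε := by ring
      _ = ((n + 1 : ℕ) : ℝ) * ε := by push_cast; ring

private lemma abs_prod_pow_sub_prod_pow_le {d : ℕ} (a b : Fin d → ℝ) (ε : ℝ) (hε : 0 ≤ ε)
    (ha : ∀ i, |a i| ≤ 1) (hb : ∀ i, |b i| ≤ 1) (hab : ∀ i, |a i - b i| ≤ ε)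
    (α : Fin d → ℕ) (s : Finset (Fin d)) :
    |∏ i ∈ s, a i ^ α i - ∏ i ∈ s, b i ^ α i| ≤ (∑ i ∈ s, (α i : ℝ)) * ε := by
  classical
  induction s using Finset.induction with
  | empty => simp
  | @insert j s hj ih =>
    rw [Finset.prod_insert hj, Finset.prod_insert hj, Finset.sum_insert hj]
    have key : a j ^ α j * ∏ i ∈ s, a i ^ α i - b j ^ α j * ∏ i ∈ s, b i ^ α i
        = a j ^ α j * (∏ i ∈ s, a i ^ α i - ∏ i ∈ s, b i ^ α i)
          + (a j ^ α j - b j ^ α j) * ∏ i ∈ s, b i ^ α i := by ring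
    rw [key]
    have hap : |a j ^ α j| ≤ 1 := by
      rw [abs_pow]; exact pow_le_one₀ (abs_nonneg _) (ha j)
    have hbp : |∏ i ∈ s, b i ^ α i| ≤ 1 := by
      rw [Finset.abs_prod]
      apply Finset.prod_le_one
      · intro i _; positivity
      · intro i _; rw [abs_pow]; exact pow_le_one₀ (abs_nonneg _) (hb i)
    calc |a j ^ α j * (∏ i ∈ s, a i ^ α i - ∏ i ∈ s, b i ^ α i)
          + (a j ^ α j - b j ^ α j) * ∏ i ∈ s, b i ^ α i|
        ≤ |a j ^ α j| * |∏ i ∈ s, a i ^ α i - ∏ i ∈ s, b i ^ α i|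
          + |a j ^ α j - b j ^ α j| * |∏ i ∈ s, b i ^ α i| := by
          rw [← abs_mul, ← abs_mul]; exact abs_add_le _ _
      _ ≤ 1 * ((∑ i ∈ s, (α i : ℝ)) * ε) + (α j * ε) * 1 := by
          have hstep := abs_pow_sub_pow_le' _ _ _ (ha j) (hb j) (hab j) (α j)
          have h1 := mul_le_mul hap ih (abs_nonneg _) zero_le_one
          have h2 := mul_le_mul hstep hbp (abs_nonneg _) (by positivity)
          linarith
      _ = ((α j : ℝ) + ∑ i ∈ s, (α i : ℝ)) * ε := by ring

/-- For a multi-index `α` with `|α| = ℓ - k ≥ 1` and nonzero `y, z ∈ ℝ^d`,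
`|y^α/|y|^{ℓ-k} - z^α/|z|^{ℓ-k}| ≤ 2(ℓ-k)|y-z|/|y|`. -/
theorem normalized_monomial_diff_bound (d ℓ k : ℕ) (hd : 1 ≤ d)
    (hlk : 1 ≤ ℓ - k)
    (α : Fin d → ℕ) (hα : ∑ i, α i = ℓ - k)
    (y z : EuclideanSpace ℝ (Fin d)) (hy : y ≠ 0) (hz : z ≠ 0) :
    |(∏ i, y i ^ α i) / ‖y‖ ^ (ℓ - k) - (∏ i, z i ^ α i) / ‖z‖ ^ (ℓ - k)| ≤
      2 * ((ℓ : ℝ) - k) * ‖y - z‖ / ‖y‖ := by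
  have hy0 : (0 : ℝ) < ‖y‖ := norm_pos_iff.mpr hy
  have hz0 : (0 : ℝ) < ‖z‖ := norm_pos_iff.mpr hz
  -- coordinate bounds
  have coord : ∀ (x : EuclideanSpace ℝ (Fin d)) (i : Fin d), |x i| ≤ ‖x‖ := by
    intro x i
    rw [EuclideanSpace.norm_eq]
    simp only [Real.norm_eq_abs, sq_abs]
    have : |x i| = Real.sqrt (x i ^ 2) := by
      rw [Real.sqrt_sq_eq_abs]
    rw [this]
    apply Real.sqrt_le_sqrt
    exact Finset.single_le_sum (f := fun j => x j ^ 2) (fun j _ => sq_nonneg _)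
      (Finset.mem_univ i)
  set a : Fin d → ℝ := fun i => y i / ‖y‖ with ha_def
  set b : Fin d → ℝ := fun i => z i / ‖z‖ with hb_def
  set ε : ℝ := 2 * ‖y - z‖ / ‖y‖ with hε_def
  have ha : ∀ i, |a i| ≤ 1 := by
    intro i
    rw [ha_def, abs_div, abs_of_pos hy0, div_le_one hy0]
    exact coord y i
  have hb : ∀ i, |b i| ≤ 1 := by
    intro i
    rw [hb_def, abs_div, abs_of_pos hz0, div_le_one hz0]
    exact coord z i
  have hab : ∀ i, |a i - b i| ≤ ε := by
    intro i
    have split : a i - b i = (y i - z i) / ‖y‖ + z i * (‖z‖ - ‖y‖) / (‖y‖ * ‖z‖) := by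
      simp only [ha_def, hb_def]
      field_simp
      ring
    rw [split]
    have h1 : |(y i - z i) / ‖y‖| ≤ ‖y - z‖ / ‖y‖ := by
      rw [abs_div, abs_of_pos hy0]
      gcongr
      have := coord (y - z) i
      simpa using this
    have h2 : |z i * (‖z‖ - ‖y‖) / (‖y‖ * ‖z‖)| ≤ ‖y - z‖ / ‖y‖ := by
      rw [abs_div, abs_mul, abs_of_pos (mul_pos hy0 hz0)]
      rw [div_le_div_iff₀ (mul_pos hy0 hz0) hy0]
      have hzz : |z i| ≤ ‖z‖ := coord z i
      have hnn : |‖z‖ - ‖y‖| ≤ ‖y - z‖ := by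
        rw [abs_sub_comm]
        exact abs_norm_sub_norm_le y z
      calc |z i| * |‖z‖ - ‖y‖| * ‖y‖ ≤ ‖z‖ * ‖y - z‖ * ‖y‖ := by gcongr
        _ = ‖y - z‖ * (‖y‖ * ‖z‖) := by ring
    calc |(y i - z i) / ‖y‖ + z i * (‖z‖ - ‖y‖) / (‖y‖ * ‖z‖)|
        ≤ |(y i - z i) / ‖y‖| + |z i * (‖z‖ - ‖y‖) / (‖y‖ * ‖z‖)| := abs_add_le _ _
      _ ≤ ‖y - z‖ / ‖y‖ + ‖y - z‖ / ‖y‖ := add_le_add h1 h2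
      _ = ε := by rw [hε_def]; ring
  have rewr : ∀ (x : EuclideanSpace ℝ (Fin d)),
      (∏ i, x i ^ α i) / ‖x‖ ^ (ℓ - k) = ∏ i, (x i / ‖x‖) ^ α i := by
    intro x
    simp_rw [div_pow]
    rw [Finset.prod_div_distrib, Finset.prod_pow_eq_pow_sum, hα]
  rw [rewr y, rewr z]
  have hkl : k ≤ ℓ := by omega
  have cast_eq : 2 * ((ℓ : ℝ) - k) * ‖y - z‖ / ‖y‖ = (∑ i, (α i : ℝ)) * ε := by
    have : (∑ i, (α i : ℝ)) = ((ℓ - k : ℕ) : ℝ) := by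
      rw [← Nat.cast_sum, hα]
    rw [this, Nat.cast_sub hkl, hε_def]
    ring
  rw [cast_eq]
  have hεnn : 0 ≤ ε := by
    rw [hε_def]; positivity
  exact abs_prod_pow_sub_prod_pow_le a b ε hεnn ha hb hab α Finset.univ
end

section
/- Let α be a multi-index with |α| > ℓ − k ≥ 1. Then for all nonzero y, z ∈ ℝ^d, | y^α/|y|^{ℓ−k} − z^α/|z|^{ℓ−k} | ≤ 2(ℓ−k) |y−z| |y|^{|α|−ℓ+k−1} + |y−z| Σ_{j=0}^{|α|−ℓ+k−1} |y|^{j} |z|^{|α|−ℓ+k−1−j}. -/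
open Finset

lemma coord_abs_le_norm {d : ℕ} (w : EuclideanSpace ℝ (Fin d)) (i : Fin d) :
    |w i| ≤ ‖w‖ := by
  rw [EuclideanSpace.norm_eq]
  have h1 : |w i| = Real.sqrt (‖w i‖ ^ 2) := by
    rw [Real.sqrt_sq_eq_abs]; simp
  rw [h1]
  apply Real.sqrt_le_sqrt
  exact Finset.single_le_sum (f := fun j => ‖w j‖ ^ 2) (fun j _ => by positivity) (mem_univ i)

lemma coord_sub_abs {d : ℕ} (y z : EuclideanSpace ℝ (Fin d)) (i : Fin d) :
    |y i - z i| ≤ ‖y - z‖ := by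
  have := coord_abs_le_norm (y - z) i
  simpa using this

lemma unit_sub_le {d : ℕ} (y z : EuclideanSpace ℝ (Fin d)) (hy : y ≠ 0) (hz : z ≠ 0) :
    ‖‖y‖⁻¹ • y - ‖z‖⁻¹ • z‖ ≤ 2 * ‖y - z‖ / ‖y‖ := by
  have hy' : (0:ℝ) < ‖y‖ := norm_pos_iff.mpr hy
  have hz' : (0:ℝ) < ‖z‖ := norm_pos_iff.mpr hz
  have key : ‖y‖⁻¹ • y - ‖z‖⁻¹ • z = ‖y‖⁻¹ • (y - z) + (‖y‖⁻¹ - ‖z‖⁻¹) • z := by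
    rw [smul_sub, sub_smul]; abel
  rw [key]
  refine le_trans (norm_add_le _ _) ?_
  rw [norm_smul, norm_smul]
  have h1 : ‖(‖y‖⁻¹ : ℝ)‖ = ‖y‖⁻¹ := by rw [Real.norm_eq_abs, abs_of_pos (by positivity)]
  have h2 : ‖(‖y‖⁻¹ - ‖z‖⁻¹ : ℝ)‖ * ‖z‖ ≤ ‖y - z‖ / ‖y‖ := by
    have : (‖y‖⁻¹ - ‖z‖⁻¹ : ℝ) = (‖z‖ - ‖y‖) / (‖y‖ * ‖z‖) := by
      field_simp
    have hden : |‖y‖ * ‖z‖| = ‖y‖ * ‖z‖ := abs_of_pos (by positivity)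
    rw [this, Real.norm_eq_abs, abs_div, hden]
    rw [div_mul_eq_mul_div, div_le_div_iff₀ (by positivity) hy']
    have habs : |‖z‖ - ‖y‖| ≤ ‖y - z‖ := by
      rw [abs_sub_comm]
      exact le_trans (abs_norm_sub_norm_le y z) (le_refl _)
    calc |‖z‖ - ‖y‖| * ‖z‖ * ‖y‖ ≤ ‖y - z‖ * ‖z‖ * ‖y‖ := by
          apply mul_le_mul_of_nonneg_right (mul_le_mul_of_nonneg_right habs hz'.le) hy'.le
      _ = ‖y - z‖ * (‖y‖ * ‖z‖) := by ring
  rw [h1]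
  calc ‖y‖⁻¹ * ‖y - z‖ + ‖(‖y‖⁻¹ - ‖z‖⁻¹ : ℝ)‖ * ‖z‖
      ≤ ‖y - z‖ / ‖y‖ + ‖y - z‖ / ‖y‖ := by
        apply add_le_add _ h2
        rw [inv_mul_eq_div, div_le_div_iff₀ hy' hy']
    _ = 2 * ‖y - z‖ / ‖y‖ := by ring

lemma mono_lip {d : ℕ} : ∀ (N : ℕ) (β : Fin d → ℕ), ∑ i, β i = N →
    ∀ (a b : Fin d → ℝ), (∀ i, |a i| ≤ 1) → (∀ i, |b i| ≤ 1) →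
    |∏ i, a i ^ β i - ∏ i, b i ^ β i| ≤ ∑ i, (β i : ℝ) * |a i - b i| := by
  intro N
  induction N with
  | zero =>
    intro β hβ a b ha hb
    have hβ0 : ∀ i ∈ Finset.univ, β i = 0 := by
      intro i _
      exact (Finset.sum_eq_zero_iff.mp hβ) i (mem_univ i)
    have h1 : ∏ i, a i ^ β i = 1 := Finset.prod_eq_one (fun i hi => by rw [hβ0 i hi, pow_zero])
    have h2 : ∏ i, b i ^ β i = 1 := Finset.prod_eq_one (fun i hi => by rw [hβ0 i hi, pow_zero])
    rw [h1, h2, sub_self, abs_zero]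
    exact Finset.sum_nonneg (fun i _ => by positivity)
  | succ N ih =>
    intro β hβ a b ha hb
    have hex : ∃ i, β i ≠ 0 := by
      by_contra h
      push_neg at h
      simp [h] at hβ
    obtain ⟨i, hi⟩ := hex
    have hi1 : 1 ≤ β i := Nat.one_le_iff_ne_zero.mpr hi
    set β' := Function.update β i (β i - 1) with hβ'def
    have hupdA : ∀ (c : Fin d → ℝ), (fun j => c j ^ β' j) =
        Function.update (fun j => c j ^ β j) i (c i ^ (β i - 1)) := by
      intro c
      funext j
      by_cases hj : j = i
      · subst hj; simp [hβ'def, Function.update_self]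
      · simp [hβ'def, Function.update_of_ne hj]
    have hfac : ∀ (c : Fin d → ℝ), c i * ∏ j, c j ^ β' j = ∏ j, c j ^ β j := by
      intro c
      have h1 : ∏ j, c j ^ β' j = c i ^ (β i - 1) * ∏ j ∈ univ \ {i}, c j ^ β j := by
        rw [show (∏ j, c j ^ β' j) = ∏ j, Function.update (fun j => c j ^ β j) i (c i ^ (β i - 1)) j
            from by rw [← hupdA]]
        exact Finset.prod_update_of_mem (mem_univ i) _ _
      have h2 : ∏ j, c j ^ β j = c i ^ β i * ∏ j ∈ univ \ {i}, c j ^ β j := by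
        rw [Finset.sdiff_singleton_eq_erase]
        exact (Finset.mul_prod_erase univ _ (mem_univ i)).symm
      rw [h1, h2, ← mul_assoc]
      congr 1
      rw [← pow_succ']
      congr 1
      omega
    have hsum' : ∑ j, β' j = N := by
      have h1 : ∑ j, β' j = (β i - 1) + ∑ j ∈ univ \ {i}, β j := by
        rw [hβ'def]
        rw [show (∑ j, Function.update β i (β i - 1) j) =
            (β i - 1) + ∑ j ∈ univ \ {i}, β j from
          Finset.sum_update_of_mem (mem_univ i) _ _]
      have h2 : β i + ∑ j ∈ univ \ {i}, β j = N + 1 := by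
        rw [← Finset.sum_eq_add_sum_sdiff_singleton_of_mem (mem_univ i) β]; exact hβ
      omega
    have IH := ih β' hsum' a b ha hb
    have hQ : |∏ j, b j ^ β' j| ≤ 1 := by
      rw [Finset.abs_prod]
      apply Finset.prod_le_one (fun j _ => by positivity)
      intro j _
      rw [abs_pow]
      exact pow_le_one₀ (abs_nonneg _) (hb j)
    have hkey : a i * ∏ j, a j ^ β' j - b i * ∏ j, b j ^ β' j =
        a i * (∏ j, a j ^ β' j - ∏ j, b j ^ β' j) + (a i - b i) * ∏ j, b j ^ β' j := by
      ring
    rw [← hfac a, ← hfac b, hkey]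
    refine le_trans (abs_add_le _ _) ?_
    rw [abs_mul, abs_mul]
    have hstep : |a i| * |∏ j, a j ^ β' j - ∏ j, b j ^ β' j| + |a i - b i| * |∏ j, b j ^ β' j| ≤
        (∑ j, (β' j : ℝ) * |a j - b j|) + |a i - b i| := by
      apply add_le_add
      · calc |a i| * |∏ j, a j ^ β' j - ∏ j, b j ^ β' j|
            ≤ 1 * |∏ j, a j ^ β' j - ∏ j, b j ^ β' j| :=
              mul_le_mul_of_nonneg_right (ha i) (abs_nonneg _)
          _ = |∏ j, a j ^ β' j - ∏ j, b j ^ β' j| := one_mul _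
          _ ≤ _ := IH
      · calc |a i - b i| * |∏ j, b j ^ β' j| ≤ |a i - b i| * 1 :=
              mul_le_mul_of_nonneg_left hQ (abs_nonneg _)
          _ = |a i - b i| := mul_one _
    refine le_trans hstep (le_of_eq ?_)
    have hsplit : ∑ j, ((β j : ℝ) * |a j - b j| - (β' j : ℝ) * |a j - b j|) = |a i - b i| := by
      rw [Finset.sum_eq_single i]
      · have hcast : ((β' i : ℕ) : ℝ) = (β i : ℝ) - 1 := by
          rw [hβ'def, Function.update_self, Nat.cast_sub hi1, Nat.cast_one]
        rw [hcast]; ring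
      · intro j _ hj
        rw [hβ'def, Function.update_of_ne hj]; ring
      · intro h; exact absurd (mem_univ i) h
    rw [Finset.sum_sub_distrib] at hsplit
    linarith [hsplit]

lemma abs_monomial_le {d : ℕ} (w : EuclideanSpace ℝ (Fin d)) (α : Fin d → ℕ) :
    |∏ i, w i ^ α i| ≤ ‖w‖ ^ (∑ i, α i) := by
  rw [Finset.abs_prod]
  calc ∏ i, |w i ^ α i| ≤ ∏ i, ‖w‖ ^ α i := by
        apply Finset.prod_le_prod (fun i _ => abs_nonneg _)
        intro i _
        rw [abs_pow]
        exact pow_le_pow_left₀ (abs_nonneg _) (coord_abs_le_norm w i) _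
    _ = ‖w‖ ^ (∑ i, α i) := Finset.prod_pow_eq_pow_sum _ _ _

lemma prod_factor {d : ℕ} (β : Fin d → ℕ) (i : Fin d) (hi1 : 1 ≤ β i) (c : Fin d → ℝ) :
    c i * ∏ j, c j ^ (Function.update β i (β i - 1)) j = ∏ j, c j ^ β j := by
  have hupdA : (fun j => c j ^ (Function.update β i (β i - 1)) j) =
      Function.update (fun j => c j ^ β j) i (c i ^ (β i - 1)) := by
    funext j
    by_cases hj : j = i
    · subst hj; simp [Function.update_self]
    · simp [Function.update_of_ne hj]
  have h1 : ∏ j, c j ^ (Function.update β i (β i - 1)) j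
      = c i ^ (β i - 1) * ∏ j ∈ univ \ {i}, c j ^ β j := by
    rw [show (∏ j, c j ^ (Function.update β i (β i - 1)) j) =
        ∏ j, Function.update (fun j => c j ^ β j) i (c i ^ (β i - 1)) j from by rw [← hupdA]]
    exact Finset.prod_update_of_mem (mem_univ i) _ _
  have h2 : ∏ j, c j ^ β j = c i ^ β i * ∏ j ∈ univ \ {i}, c j ^ β j := by
    rw [Finset.sdiff_singleton_eq_erase]
    exact (Finset.mul_prod_erase univ _ (mem_univ i)).symm
  rw [h1, h2, ← mul_assoc]
  congr 1
  rw [← pow_succ']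
  congr 1
  omega

lemma sum_update_pred {d : ℕ} (β : Fin d → ℕ) (i : Fin d) (hi : β i ≠ 0) :
    ∑ j, (Function.update β i (β i - 1)) j = (∑ j, β j) - 1 := by
  have h1 : ∑ j, (Function.update β i (β i - 1)) j = (β i - 1) + ∑ j ∈ univ \ {i}, β j :=
    Finset.sum_update_of_mem (mem_univ i) _ _
  have h2 : ∑ j, β j = β i + ∑ j ∈ univ \ {i}, β j :=
    Finset.sum_eq_add_sum_sdiff_singleton_of_mem (mem_univ i) β
  omega

lemma main_ind {d m : ℕ} (y z : EuclideanSpace ℝ (Fin d)) (hy : y ≠ 0) (hz : z ≠ 0) :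
    ∀ (n : ℕ), m ≤ n → ∀ α : Fin d → ℕ, ∑ i, α i = n →
    |(∏ i, y i ^ α i) / ‖y‖ ^ m - (∏ i, z i ^ α i) / ‖z‖ ^ m| ≤
      2 * m * ‖y - z‖ * ‖y‖ ^ (n - m) / ‖y‖ +
        ‖y - z‖ * ∑ j ∈ Finset.range (n - m), ‖y‖ ^ j * ‖z‖ ^ (n - m - 1 - j) := by
  have hy' : (0:ℝ) < ‖y‖ := norm_pos_iff.mpr hy
  have hz' : (0:ℝ) < ‖z‖ := norm_pos_iff.mpr hz
  intro n hn
  induction n, hn using Nat.le_induction with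
  | base =>
    intro α hα
    set u : EuclideanSpace ℝ (Fin d) := ‖y‖⁻¹ • y with hu
    set v : EuclideanSpace ℝ (Fin d) := ‖z‖⁻¹ • z with hv
    have hui : ∀ i, u i = ‖y‖⁻¹ * y i := fun i => rfl
    have hvi : ∀ i, v i = ‖z‖⁻¹ * z i := fun i => rfl
    have hprodu : ∏ i, u i ^ α i = (∏ i, y i ^ α i) / ‖y‖ ^ m := by
      simp only [hui, mul_pow]
      rw [Finset.prod_mul_distrib, Finset.prod_pow_eq_pow_sum, hα, inv_pow, inv_mul_eq_div]
    have hprodv : ∏ i, v i ^ α i = (∏ i, z i ^ α i) / ‖z‖ ^ m := by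
      simp only [hvi, mul_pow]
      rw [Finset.prod_mul_distrib, Finset.prod_pow_eq_pow_sum, hα, inv_pow, inv_mul_eq_div]
    have hub : ∀ i, |u i| ≤ 1 := by
      intro i
      rw [hui i, abs_mul, abs_of_pos (by positivity : (0:ℝ) < ‖y‖⁻¹)]
      rw [inv_mul_le_iff₀ hy', mul_one]
      exact coord_abs_le_norm y i
    have hvb : ∀ i, |v i| ≤ 1 := by
      intro i
      rw [hvi i, abs_mul, abs_of_pos (by positivity : (0:ℝ) < ‖z‖⁻¹)]
      rw [inv_mul_le_iff₀ hz', mul_one]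
      exact coord_abs_le_norm z i
    have h1 := mono_lip m α hα u v hub hvb
    rw [hprodu, hprodv] at h1
    have h2 : ∑ i, (α i : ℝ) * |u i - v i| ≤ (m : ℝ) * ‖u - v‖ := by
      calc ∑ i, (α i : ℝ) * |u i - v i| ≤ ∑ i, (α i : ℝ) * ‖u - v‖ := by
            apply Finset.sum_le_sum
            intro i _
            exact mul_le_mul_of_nonneg_left (coord_sub_abs u v i) (by positivity)
        _ = (m : ℝ) * ‖u - v‖ := by
            rw [← Finset.sum_mul]
            congr 1
            rw [← hα]
            push_cast
            ring
    have h3 : ‖u - v‖ ≤ 2 * ‖y - z‖ / ‖y‖ := unit_sub_le y z hy hz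
    have h4 : (m : ℝ) * ‖u - v‖ ≤ (m : ℝ) * (2 * ‖y - z‖ / ‖y‖) :=
      mul_le_mul_of_nonneg_left h3 (by positivity)
    simp only [Nat.sub_self, pow_zero, Finset.range_zero, Finset.sum_empty, mul_zero, mul_one,
      add_zero]
    calc |(∏ i, y i ^ α i) / ‖y‖ ^ m - (∏ i, z i ^ α i) / ‖z‖ ^ m|
        ≤ ∑ i, (α i : ℝ) * |u i - v i| := h1
      _ ≤ (m : ℝ) * (2 * ‖y - z‖ / ‖y‖) := le_trans h2 h4
      _ = 2 * (m : ℝ) * ‖y - z‖ / ‖y‖ := by ring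
  | succ n hn ih =>
    intro α hα
    have hex : ∃ i, α i ≠ 0 := by
      by_contra h
      push_neg at h
      simp [h] at hα
    obtain ⟨i, hi⟩ := hex
    have hi1 : 1 ≤ α i := Nat.one_le_iff_ne_zero.mpr hi
    set α' := Function.update α i (α i - 1) with hα'def
    have hsum' : ∑ j, α' j = n := by
      rw [hα'def, sum_update_pred α i hi, hα]
      omega
    set Sy := (∏ j, y j ^ α' j) / ‖y‖ ^ m with hSy
    set Sz := (∏ j, z j ^ α' j) / ‖z‖ ^ m with hSz
    have hfy : (∏ j, y j ^ α j) / ‖y‖ ^ m = y i * Sy := by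
      rw [hSy, ← prod_factor α i hi1 (fun j => y j), mul_div_assoc]
    have hfz : (∏ j, z j ^ α j) / ‖z‖ ^ m = z i * Sz := by
      rw [hSz, ← prod_factor α i hi1 (fun j => z j), mul_div_assoc]
    have hSzb : |Sz| ≤ ‖z‖ ^ (n - m) := by
      rw [hSz, abs_div, abs_of_pos (by positivity : (0:ℝ) < ‖z‖ ^ m)]
      rw [div_le_iff₀ (by positivity)]
      rw [← pow_add]
      have : n - m + m = n := by omega
      rw [this, ← hsum']
      exact abs_monomial_le z α'
    have hIH := ih α' hsum'
    have hstep1 : |(∏ j, y j ^ α j) / ‖y‖ ^ m - (∏ j, z j ^ α j) / ‖z‖ ^ m| ≤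
        ‖y‖ * |Sy - Sz| + ‖y - z‖ * ‖z‖ ^ (n - m) := by
      rw [hfy, hfz]
      have hkey : y i * Sy - z i * Sz = y i * (Sy - Sz) + (y i - z i) * Sz := by ring
      rw [hkey]
      refine le_trans (abs_add_le _ _) ?_
      rw [abs_mul, abs_mul]
      apply add_le_add
      · exact mul_le_mul_of_nonneg_right (coord_abs_le_norm y i) (abs_nonneg _)
      · calc |y i - z i| * |Sz| ≤ ‖y - z‖ * |Sz| :=
              mul_le_mul_of_nonneg_right (coord_sub_abs y z i) (abs_nonneg _)
          _ ≤ ‖y - z‖ * ‖z‖ ^ (n - m) := mul_le_mul_of_nonneg_left hSzb (norm_nonneg _)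
    have hstep2 : ‖y‖ * |Sy - Sz| + ‖y - z‖ * ‖z‖ ^ (n - m) ≤
        ‖y‖ * (2 * m * ‖y - z‖ * ‖y‖ ^ (n - m) / ‖y‖ +
          ‖y - z‖ * ∑ j ∈ Finset.range (n - m), ‖y‖ ^ j * ‖z‖ ^ (n - m - 1 - j))
          + ‖y - z‖ * ‖z‖ ^ (n - m) := by
      refine add_le_add ?_ le_rfl
      exact mul_le_mul_of_nonneg_left hIH (norm_nonneg _)
    refine le_trans (le_trans hstep1 hstep2) (le_of_eq ?_)
    have hnm : n + 1 - m = (n - m) + 1 := by omega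
    rw [hnm]
    have hpow : ‖y‖ * (2 * (m:ℝ) * ‖y - z‖ * ‖y‖ ^ (n - m) / ‖y‖) =
        2 * (m:ℝ) * ‖y - z‖ * ‖y‖ ^ (n - m + 1) / ‖y‖ := by
      rw [pow_succ]
      field_simp
    have hsum_eq : ∑ j ∈ Finset.range (n - m + 1), ‖y‖ ^ j * ‖z‖ ^ (n - m + 1 - 1 - j) =
        ‖y‖ * (∑ j ∈ Finset.range (n - m), ‖y‖ ^ j * ‖z‖ ^ (n - m - 1 - j)) + ‖z‖ ^ (n - m) := by
      rw [Finset.sum_range_succ']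
      congr 1
      · rw [Finset.mul_sum]
        apply Finset.sum_congr rfl
        intro j _
        rw [show n - m + 1 - 1 - (j + 1) = n - m - 1 - j from by omega, pow_succ]
        ring
      · norm_num
    rw [mul_add, hpow, hsum_eq]
    ring

/-- For a multi-index `α` with `|α| > ℓ - k ≥ 1` and nonzero `y, z ∈ ℝ^d`,
`|y^α/|y|^{ℓ-k} - z^α/|z|^{ℓ-k}| ≤ 2(ℓ-k)|y-z| |y|^{|α|-ℓ+k-1}
  + |y-z| Σ_{j=0}^{|α|-ℓ+k-1} |y|^j |z|^{|α|-ℓ+k-1-j}`. -/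
theorem normalized_monomial_diff_bound_higher (d ℓ k : ℕ) (hd : 1 ≤ d)
    (hlk : 1 ≤ ℓ - k)
    (α : Fin d → ℕ) (hα : ℓ - k < ∑ i, α i)
    (y z : EuclideanSpace ℝ (Fin d)) (hy : y ≠ 0) (hz : z ≠ 0) :
    |(∏ i, y i ^ α i) / ‖y‖ ^ (ℓ - k) - (∏ i, z i ^ α i) / ‖z‖ ^ (ℓ - k)| ≤
      2 * ((ℓ : ℝ) - k) * ‖y - z‖ * ‖y‖ ^ ((∑ i, α i) - (ℓ - k) - 1) +
        ‖y - z‖ * ∑ j ∈ Finset.range ((∑ i, α i) - (ℓ - k)),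
          ‖y‖ ^ j * ‖z‖ ^ ((∑ i, α i) - (ℓ - k) - 1 - j) := by
  have hkl : k ≤ ℓ := by omega
  have hy' : (0:ℝ) < ‖y‖ := norm_pos_iff.mpr hy
  have h := main_ind y z hy hz (∑ i, α i) (le_of_lt hα) α rfl
  have hcast : ((ℓ : ℝ) - k) = ((ℓ - k : ℕ) : ℝ) := by
    rw [Nat.cast_sub hkl]
  have hpow : ‖y‖ ^ ((∑ i, α i) - (ℓ - k)) / ‖y‖ = ‖y‖ ^ ((∑ i, α i) - (ℓ - k) - 1) := by
    rw [show (∑ i, α i) - (ℓ - k) = ((∑ i, α i) - (ℓ - k) - 1) + 1 from by omega, pow_succ,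
      mul_div_assoc, div_self hy'.ne', mul_one]
    congr 1
  rw [hcast]
  refine le_trans h (le_of_eq ?_)
  rw [← hpow]
  ring
end
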